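/- If there exists a finite set A of integers such that |f(A)| > |g(A)| for polynomials f, g with integer coefficients (where f(A), g(A) are the value sets over tuples from A), then for all sufficiently large moduli m there exists a set A' of congruence classes modulo m with |f(A')| > |g(A')|. -/
import Mathlib


open Finset

theorem stmt_18 (n : ℕ) (f g : MvPolynomial (Fin n) ℤ)
    (h : ∃ A : Finset ℤ,
      ((Fintype.piFinset fun _ : Fin n => A).image fun a => MvPolynomial.eval a f).card >
      ((Fintype.piFinset fun _ : Fin n => A).image fun a => MvPolynomial.eval a g).card) :
    ∃ M : ℕ, ∀ m : ℕ, M ≤ m →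
      ∃ A' : Finset (ZMod m),
        ((Fintype.piFinset fun _ : Fin n => A').image fun a =>
            MvPolynomial.eval a (f.map (Int.castRingHom (ZMod m)))).card >
        ((Fintype.piFinset fun _ : Fin n => A').image fun a =>
            MvPolynomial.eval a (g.map (Int.castRingHom (ZMod m)))).card := by
  obtain ⟨A, hA⟩ := h
  set S := (Fintype.piFinset fun _ : Fin n => A).image fun a => MvPolynomial.eval a f with hS
  set T := (Fintype.piFinset fun _ : Fin n => A).image fun a => MvPolynomial.eval a g with hT
  set B : ℕ := S.sup fun x => x.natAbs with hB
  refine ⟨2 * B + 1, fun m hm => ?_⟩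
  refine ⟨A.image fun x : ℤ => (x : ZMod m), ?_⟩
  have hpi : (Fintype.piFinset fun _ : Fin n => A.image fun x : ℤ => (x : ZMod m)) =
      (Fintype.piFinset fun _ : Fin n => A).image fun b i => ((b i : ℤ) : ZMod m) :=
    Fintype.piFinset_image (fun _ (x : ℤ) => (x : ZMod m)) (fun _ => A)
  have key : ∀ (p : MvPolynomial (Fin n) ℤ) (a : Fin n → ℤ),
      MvPolynomial.eval (fun i => ((a i : ℤ) : ZMod m)) (p.map (Int.castRingHom (ZMod m)))
        = ((MvPolynomial.eval a p : ℤ) : ZMod m) := by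
    intro p a
    rw [MvPolynomial.eval_map]
    have h2 := MvPolynomial.eval₂_comp_left (Int.castRingHom (ZMod m)) (RingHom.id ℤ) a p
    simp only [RingHom.comp_id, MvPolynomial.eval₂_id] at h2
    exact h2.symm
  have himg : ∀ p : MvPolynomial (Fin n) ℤ,
      ((Fintype.piFinset fun _ : Fin n => A.image fun x : ℤ => (x : ZMod m)).image fun a =>
          MvPolynomial.eval a (p.map (Int.castRingHom (ZMod m)))) =
      ((Fintype.piFinset fun _ : Fin n => A).image fun a =>
          MvPolynomial.eval a p).image fun x => ((x : ℤ) : ZMod m) := by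
    intro p
    rw [hpi, Finset.image_image, Finset.image_image]
    refine Finset.image_congr fun a _ => key p a
  rw [himg f, himg g, ← hS, ← hT]
  have hinj : Set.InjOn (fun x : ℤ => (x : ZMod m)) S := by
    intro x hx y hy hxy
    have hdvd : (m : ℤ) ∣ x - y := by
      rw [← ZMod.intCast_zmod_eq_zero_iff_dvd]
      push_cast
      simp only at hxy
      rw [hxy]; ring
    have hxB : x.natAbs ≤ B := Finset.le_sup hx
    have hyB : y.natAbs ≤ B := Finset.le_sup hy
    have : x - y = 0 := by
      refine Int.eq_zero_of_abs_lt_dvd hdvd ?_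
      have h1 : |x| ≤ (B : ℤ) := by rwa [Int.abs_eq_natAbs, Int.ofNat_le]
      have h2 : |y| ≤ (B : ℤ) := by rwa [Int.abs_eq_natAbs, Int.ofNat_le]
      have h3 : (2 * B + 1 : ℤ) ≤ (m : ℤ) := by exact_mod_cast hm
      calc |x - y| ≤ |x| + |y| := abs_sub _ _
        _ ≤ 2 * B := by linarith
        _ < m := by linarith
    linarith
  calc (T.image fun x : ℤ => (x : ZMod m)).card ≤ T.card := Finset.card_image_le
    _ < S.card := hA
    _ = (S.image fun x : ℤ => (x : ZMod m)).card := (Finset.card_image_of_injOn hinj).symm
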